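/- arXiv:2512.06033 — 2 statements merged into one kernel-verified Lean document; each statement's English description precedes it below -/
import Mathlib

section
/- Let R : ℝ^d → ℝ be twice continuously differentiable, let θ̂ ∈ ℝ^d satisfy ∇R(θ̂) = 0, and suppose the Hessian H = ∇²R(θ̂) is positive definite. Let ℓ : ℝ^d → ℝ be twice continuously differentiable, let ε₀ > 0, and let θ : (-ε₀, ε₀) → ℝ^d be a continuously differentiable map with θ(0) = θ̂ satisfying ∇R(θ(ε)) + ε·∇ℓ(θ(ε)) = 0 for all ε ∈ (-ε₀, ε₀). Let ℓ_eval : ℝ^d → ℝ be continuously differentiable. If the influence -⟨∇ℓ_eval(θ̂), H⁻¹ ∇ℓ(θ̂)⟩ is strictly negative, then there exists ε₁ > 0 such that for all ε with 0 < ε < ε₁ one has ℓ_eval(θ(ε)) < ℓ_eval(θ̂); that is, upweighting the candidate point strictly decreases the evaluation loss for all sufficiently small positive perturbation weights. -/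
/-!
Differentiating the first-order condition `∇R(θ ε) + ε ∇ℓ(θ ε) = 0` at `ε = 0` gives
`H θ'(0) + ∇ℓ(θ̂) = 0`; positive definiteness makes `H` invertible, so `θ'(0) = -H⁻¹ ∇ℓ(θ̂)`.
By the chain rule the derivative of `ε ↦ ℓeval (θ ε)` at `0` is `⟪∇ℓeval(θ̂), θ'(0)⟫`, which is
exactly the influence, and a function with negative derivative at a point is smaller than its
value there just to the right of it.
-/

open scoped RealInnerProductSpace
open InnerProductSpace Filter Topology Set

theorem ContDiff.gradient {E : Type*} [NormedAddCommGroup E] [InnerProductSpace ℝ E]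
    [CompleteSpace E] {f : E → ℝ} {n : WithTop ℕ∞} (hf : ContDiff ℝ (n + 1) f) :
    ContDiff ℝ n (gradient f) :=
  (toDual ℝ E).symm.contDiff.comp (hf.fderiv_right le_rfl)

theorem HasGradientAt.comp_hasDerivAt {E : Type*} [NormedAddCommGroup E] [InnerProductSpace ℝ E]
    [CompleteSpace E] {f : E → ℝ} {g : E} {γ : ℝ → E} {v : E} {t : ℝ}
    (hf : HasGradientAt f g (γ t)) (hγ : HasDerivAt γ v t) :
    HasDerivAt (fun s => f (γ s)) ⟪g, v⟫ t :=
  hf.hasFDerivAt.comp_hasDerivAt t hγ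

theorem ContinuousLinearMap.isUnit_of_forall_inner_map_self_pos {E : Type*}
    [NormedAddCommGroup E] [InnerProductSpace ℝ E] [FiniteDimensional ℝ E] {H : E →L[ℝ] E}
    (hH : ∀ v ≠ 0, 0 < ⟪H v, v⟫) : IsUnit H := by
  rw [isUnit_iff_isUnit_toLinearMap, LinearMap.isUnit_iff_ker_eq_bot, LinearMap.ker_eq_bot']
  intro v (hv : H v = 0)
  by_contra hv0
  simpa [hv] using hH v hv0

theorem ContinuousLinearMap.eq_neg_ring_inverse_apply_of_apply_add_eq_zero {E : Type*}
    [NormedAddCommGroup E] [NormedSpace ℝ E] {H : E →L[ℝ] E} (hH : IsUnit H) {v w : E}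
    (h : H v + w = 0) : v = -(Ring.inverse H) w := by
  obtain ⟨u, rfl⟩ := hH
  rw [eq_neg_of_add_eq_zero_right h, Ring.inverse_unit, map_neg, neg_neg, ← mul_apply_eq_comp,
    u.inv_mul, one_apply_eq_self]

theorem hasDerivAt_smul_of_continuousAt_zero {F : Type*} [NormedAddCommGroup F]
    [NormedSpace ℝ F] {g : ℝ → F} (hg : ContinuousAt g 0) :
    HasDerivAt (fun t => t • g t) (g 0) 0 := by
  rw [hasDerivAt_iff_isLittleO]
  have hsmall : (fun t => g t - g 0) =o[𝓝 0] fun _ => (1 : ℝ) :=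
    (Asymptotics.isLittleO_one_iff ℝ).2 (tendsto_sub_nhds_zero_iff.2 hg)
  have hrem : (fun t : ℝ => t • (g t - g 0)) =o[𝓝 0] fun t => t := by
    simpa using (Asymptotics.isBigO_refl (fun t : ℝ => t) (𝓝 0)).smul_isLittleO hsmall
  simpa [smul_sub] using hrem

theorem apply_add_eq_zero_of_eventually_add_smul_eq_zero {E F : Type*} [NormedAddCommGroup E]
    [NormedSpace ℝ E] [NormedAddCommGroup F] [NormedSpace ℝ F] {G L : E → F} {θ : ℝ → E}
    {v : E} {H : E →L[ℝ] F} (hθ : HasDerivAt θ v 0) (hG : HasFDerivAt G H (θ 0))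
    (hL : ContinuousAt L (θ 0)) (hGL : ∀ᶠ t in 𝓝 0, G (θ t) + t • L (θ t) = 0) :
    H v + L (θ 0) = 0 :=
  ((hG.comp_hasDerivAt 0 hθ).add
    (hasDerivAt_smul_of_continuousAt_zero (hL.comp hθ.continuousAt))).unique
      ((hasDerivAt_const 0 0).congr_of_eventuallyEq hGL)

theorem HasDerivAt.eventually_lt_of_neg {f : ℝ → ℝ} {f' x : ℝ} (hf : HasDerivAt f f' x)
    (hf' : f' < 0) : ∀ᶠ y in 𝓝[>] x, f y < f x := by
  filter_upwards [hf.hasDerivWithinAt.limsup_slope_le' (lt_irrefl x) hf',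
    self_mem_nhdsWithin] with y hslope hxy
  rw [slope_def_field, div_neg_iff] at hslope
  rcases hslope with ⟨_, hneg⟩ | ⟨hneg, _⟩
  · linarith [sub_pos.2 (show x < y from hxy)]
  · linarith

theorem negative_influence_decreases_eval_loss_general
    (d : ℕ) (R ℓ ℓeval : EuclideanSpace ℝ (Fin d) → ℝ)
    (hR : ContDiff ℝ 2 R) (hℓ : ContDiff ℝ 2 ℓ) (hℓeval : ContDiff ℝ 1 ℓeval)
    (θhat : EuclideanSpace ℝ (Fin d))
    (hpos : ∀ v : EuclideanSpace ℝ (Fin d), v ≠ 0 →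
      0 < ⟪(fderiv ℝ (gradient R) θhat) v, v⟫)
    (ε₀ : ℝ) (hε₀ : 0 < ε₀)
    (θ : ℝ → EuclideanSpace ℝ (Fin d))
    (hθ : ContDiffOn ℝ 1 θ (Set.Ioo (-ε₀) ε₀))
    (hθ0 : θ 0 = θhat)
    (hopt : ∀ ε ∈ Set.Ioo (-ε₀) ε₀,
      gradient R (θ ε) + ε • gradient ℓ (θ ε) = 0)
    (hneg : -⟪gradient ℓeval θhat,
        (Ring.inverse (fderiv ℝ (gradient R) θhat)) (gradient ℓ θhat)⟫ < 0) :
    ∃ ε₁ > (0 : ℝ), ∀ ε : ℝ, 0 < ε → ε < ε₁ → ℓeval (θ ε) < ℓeval θhat := by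
  subst hθ0
  have hnhds : Ioo (-ε₀) ε₀ ∈ 𝓝 (0 : ℝ) := Ioo_mem_nhds (neg_neg_of_pos hε₀) hε₀
  have hθ' : HasDerivAt θ (deriv θ 0) 0 :=
    ((hθ.differentiableOn one_ne_zero).differentiableAt hnhds).hasDerivAt
  have hresponse :
      deriv θ 0 = -(Ring.inverse (fderiv ℝ (gradient R) (θ 0))) (gradient ℓ (θ 0)) := by
    refine ContinuousLinearMap.eq_neg_ring_inverse_apply_of_apply_add_eq_zero
      (ContinuousLinearMap.isUnit_of_forall_inner_map_self_pos hpos) ?_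
    refine apply_add_eq_zero_of_eventually_add_smul_eq_zero hθ' ?_
      (hℓ.gradient (n := 1)).continuous.continuousAt (eventually_of_mem hnhds hopt)
    exact ((hR.gradient (n := 1)).differentiable one_ne_zero _).hasFDerivAt
  have hloss : HasDerivAt (fun ε => ℓeval (θ ε)) ⟪gradient ℓeval (θ 0), deriv θ 0⟫ 0 :=
    ((hℓeval.differentiable one_ne_zero) (θ 0)).hasGradientAt.comp_hasDerivAt hθ'
  obtain ⟨ε₁, hε₁, hdecr⟩ := mem_nhdsGT_iff_exists_Ioo_subset.1
    (hloss.eventually_lt_of_neg (by rwa [hresponse, inner_neg_right]))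
  exact ⟨ε₁, hε₁, fun ε hε hεε₁ => hdecr ⟨hε, hεε₁⟩⟩

/-- **A strictly negative influence score means the candidate point is beneficial.**
Under the setup of the influence lemma, if the influence
`-⟪∇ℓeval(θ̂), H⁻¹ ∇ℓ(θ̂)⟫` is strictly negative, then there exists `ε₁ > 0`
such that upweighting the candidate point with any weight `0 < ε < ε₁`
strictly decreases the evaluation loss: `ℓeval (θ ε) < ℓeval θ̂`. -/
theorem negative_influence_decreases_eval_loss
    (d : ℕ) (R ℓ ℓeval : EuclideanSpace ℝ (Fin d) → ℝ)
    (hR : ContDiff ℝ 2 R) (hℓ : ContDiff ℝ 2 ℓ) (hℓeval : ContDiff ℝ 1 ℓeval)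
    (θhat : EuclideanSpace ℝ (Fin d))
    (hcrit : gradient R θhat = 0)
    (hpos : ∀ v : EuclideanSpace ℝ (Fin d), v ≠ 0 →
      0 < ⟪(fderiv ℝ (gradient R) θhat) v, v⟫)
    (ε₀ : ℝ) (hε₀ : 0 < ε₀)
    (θ : ℝ → EuclideanSpace ℝ (Fin d))
    (hθ : ContDiffOn ℝ 1 θ (Set.Ioo (-ε₀) ε₀))
    (hθ0 : θ 0 = θhat)
    (hopt : ∀ ε ∈ Set.Ioo (-ε₀) ε₀,
      gradient R (θ ε) + ε • gradient ℓ (θ ε) = 0)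
    (hneg : -⟪gradient ℓeval θhat,
        (Ring.inverse (fderiv ℝ (gradient R) θhat)) (gradient ℓ θhat)⟫ < 0) :
    ∃ ε₁ > (0 : ℝ), ∀ ε : ℝ, 0 < ε → ε < ε₁ → ℓeval (θ ε) < ℓeval θhat :=
  negative_influence_decreases_eval_loss_general d R ℓ ℓeval hR hℓ hℓeval θhat hpos ε₀ hε₀ θ hθ hθ0
    hopt hneg
end

section
/- Let t = 2^m for some natural number m, and let a, b : ZMod t → ℝ be real vectors indexed by the cyclic group of order t. Define c₀ : ZMod t → ℝ by c₀(i) = a(i)·b(i) (slotwise product), and inductively c_{k+1}(i) = c_k(i) + c_k(i + 2^k) for 0 ≤ k < m (addition of a cyclic rotation by 2^k slots). Then after m steps, every slot of c_m contains the full inner product: for all i ∈ ZMod t, c_m(i) = Σ_{j ∈ ZMod t} a(j)·b(j). -/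
/-!
After `k` rotate-and-add steps, slot `i` holds the sum of the initial vector over the `2^k`
consecutive slots `i, i + 1, …, i + 2^k - 1`: doubling the window is exactly adding its
translate by `2^k`. For `k = m` the window is the whole cyclic group `ZMod (2^m)`.
-/

open Finset

theorem eq_sum_range_two_pow_of_rotate_add {G M : Type*} [AddMonoid G] [AddCommMonoid M]
    (g : G) (m : ℕ) (c : ℕ → G → M)
    (hstep : ∀ k < m, ∀ i, c (k + 1) i = c k i + c k (i + 2 ^ k • g)) :
    ∀ k ≤ m, ∀ i, c k i = ∑ j ∈ range (2 ^ k), c 0 (i + j • g) := by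
  intro k
  induction k with
  | zero => simp
  | succ k ih =>
    intro hk i
    rw [hstep k hk i, ih (Nat.le_of_succ_le hk), ih (Nat.le_of_succ_le hk), pow_succ,
      mul_two, sum_range_add]
    simp only [add_assoc, add_nsmul]

theorem ZMod.sum_range_natCast {M : Type*} [AddCommMonoid M] (n : ℕ) [NeZero n]
    (f : ZMod n → M) : ∑ j ∈ range n, f j = ∑ x, f x :=
  sum_nbij (↑) (fun _ _ ↦ mem_univ _)
    (fun j hj k hk hjk ↦ by
      simpa [ZMod.val_natCast_of_lt (mem_range.mp hj), ZMod.val_natCast_of_lt (mem_range.mp hk)]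
        using congrArg ZMod.val hjk)
    (fun x _ ↦ ⟨x.val, mem_range.mpr x.val_lt, ZMod.natCast_zmod_val x⟩) (fun _ _ ↦ rfl)

theorem ZMod.sum_range_add_natCast {M : Type*} [AddCommMonoid M] (n : ℕ) [NeZero n]
    (f : ZMod n → M) (i : ZMod n) : ∑ j ∈ range n, f (i + j) = ∑ x, f x := by
  rw [ZMod.sum_range_natCast n (fun x ↦ f (i + x))]
  exact Equiv.sum_comp (Equiv.addLeft i) f

/-- **Correctness of the RotateAndSum procedure.**
Let `t = 2^m` and let `a b : ZMod t → ℝ`. Starting from the slotwise product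
`c 0 i = a i * b i`, and inductively adding a cyclic rotation by `2^k` slots,
`c (k+1) i = c k i + c k (i + 2^k)` for `k < m`, every slot of `c m` contains
the full inner product `∑ j, a j * b j`. -/
theorem rotate_and_sum_correct
    (m : ℕ) (a b : ZMod (2 ^ m) → ℝ)
    (c : ℕ → ZMod (2 ^ m) → ℝ)
    (h0 : ∀ i, c 0 i = a i * b i)
    (hstep : ∀ k, k < m → ∀ i : ZMod (2 ^ m),
      c (k + 1) i = c k i + c k (i + ((2 ^ k : ℕ) : ZMod (2 ^ m)))) :
    ∀ i : ZMod (2 ^ m), c m i = ∑ j : ZMod (2 ^ m), a j * b j := by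
  intro i
  have hwindow := eq_sum_range_two_pow_of_rotate_add 1 m c
    (by simpa only [nsmul_one] using hstep) m le_rfl i
  simp only [nsmul_one] at hwindow
  rw [hwindow, ZMod.sum_range_add_natCast]
  exact sum_congr rfl fun x _ ↦ h0 x
end
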